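/- (Guaranteed coverage.) Let D ⊆ ℝ be nonempty with finite supremum s_D, and let ν be a Borel probability measure supported on D with finite mean μ. Let X = (X_1,…,X_n) be i.i.d. with law ν. Then for any function T : ℝⁿ → ℝ and any α ∈ (0,1): P( b^α_{D,T}(X) < μ ) ≤ α. -/

import Mathlib

/-!
Let `F` be the cdf of `ν` and `F⁻¹` its generalized inverse, so that `F⁻¹(U)` is an i.i.d.
sample from `ν`. For `z = F⁻¹(U)` one has `U₍ᵢ₎ ≤ F(z₍ᵢ₎)`, and integrating the stairstep
`∑ᵢ 1{X ≤ z₍ᵢ₎} (z₍ᵢ₊₁₎ - z₍ᵢ₎) ≤ s_D - X` gives `μ ≤ m_D(z, U)`. Since `m_D(·, U)` is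
continuous, `μ ≤ b_{D,T}(x, U)` whenever `F⁻¹(U)` lies in the closure of `S_{D,T}(x)`; hence
`b^α_{D,T}(x) < μ` forces that closure to have `νⁿ`-probability at most `α`. Up to a null set,
the event `{b^α_{D,T}(X) < μ}` is covered by these closures for `x` in the event, which are
nested according to `T x`, so a countable cofinal subfamily bounds its probability by `α`.
-/

open MeasureTheory Set

/-- The sorted rearrangement (order statistics) of a finite real vector:
`sortedVec x i` is the (i+1)-st order statistic `x_{(i+1)}` (0-indexed). -/
noncomputable def sortedVec {n : ℕ} (x : Fin n → ℝ) : Fin n → ℝ :=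
  x ∘ ⇑(Tuple.sort x)

/-- The induced mean `m(x, ℓ) = s - ∑ ℓ_{(i)} (x_{(i+1)} - x_{(i)})`, with `x_{(n+1)} := s`. -/
noncomputable def inducedMean {n : ℕ} (s : ℝ) (x ℓ : Fin n → ℝ) : ℝ :=
  s - ∑ i : Fin n, sortedVec ℓ i * ((Fin.snoc (sortedVec x) s : Fin (n+1) → ℝ) i.succ - sortedVec x i)

/-- `S_{D,T}(x) = {y ∈ Dⁿ : T y ≤ T x}`. -/
def SsetD {n : ℕ} (D : Set ℝ) (T : (Fin n → ℝ) → ℝ) (x : Fin n → ℝ) : Set (Fin n → ℝ) :=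
  {y | (∀ i, y i ∈ D) ∧ T y ≤ T x}

/-- `b_{D,T}(x, u) = sup_{z ∈ S_{D,T}(x)} m_{sup D}(z, u)`. -/
noncomputable def bfun {n : ℕ} (D : Set ℝ) (T : (Fin n → ℝ) → ℝ) (x u : Fin n → ℝ) : ℝ :=
  sSup ((fun z => inducedMean (sSup D) z u) '' SsetD D T x)

/-- The uniform probability measure on `[0,1]`. -/
noncomputable def unif01 : Measure ℝ := volume.restrict (Icc (0:ℝ) 1)

/-- The law of an i.i.d. sample of size `n` from Uniform(0,1). -/
noncomputable def unifPi (n : ℕ) : Measure (Fin n → ℝ) := Measure.pi fun _ => unif01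

/-- The `p`-quantile of the random variable `Y` under `μ`:
`Q(p, Y) = inf {y : P(Y ≤ y) ≥ p}`. -/
noncomputable def rquantile {Ω : Type*} [MeasurableSpace Ω] (μ : Measure Ω)
    (Y : Ω → ℝ) (p : ℝ) : ℝ :=
  sInf {y : ℝ | ENNReal.ofReal p ≤ μ {ω | Y ω ≤ y}}

/-- The upper confidence bound `b^α_{D,T}(x) = Q(1 - α, b_{D,T}(x, U))`, `U` i.i.d. Uniform(0,1). -/
noncomputable def ucb {n : ℕ} (D : Set ℝ) (T : (Fin n → ℝ) → ℝ) (α : ℝ)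
    (x : Fin n → ℝ) : ℝ :=
  rquantile (unifPi n) (bfun D T x) (1 - α)

/-- The stairstep function `G_{x,ℓ}` with top value at `s`. -/
noncomputable def stairstep {n : ℕ} (s : ℝ) (x ℓ : Fin n → ℝ) (t : ℝ) : ℝ :=
  if s ≤ t then 1 else sSup ({0} ∪ (sortedVec ℓ '' {i | sortedVec x i ≤ t}))

/-- The `k`-th smallest value (1-indexed) among `m 0, …, m (L-1)`. -/
noncomputable def kthSmallest {L : ℕ} (m : Fin L → ℝ) (k : ℕ) : ℝ :=
  sInf {y : ℝ | k ≤ Nat.card {j : Fin L // m j ≤ y}}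

open ProbabilityTheory Filter
open scoped ENNReal

section OrderStatistics

variable {n : ℕ}

lemma sortedVec_monotone (x : Fin n → ℝ) : Monotone (sortedVec x) :=
  Tuple.monotone_sort x

lemma sortedVec_apply_mem {x : Fin n → ℝ} {A : Set ℝ} (hx : ∀ j, x j ∈ A) (i : Fin n) :
    sortedVec x i ∈ A :=
  hx _

lemma sortedVec_comp_of_monotone {f : ℝ → ℝ} (x : Fin n → ℝ)
    (hf : Monotone (f ∘ sortedVec x)) : sortedVec (f ∘ x) = f ∘ sortedVec x :=
  Tuple.unique_monotone (Tuple.monotone_sort (f ∘ x)) hf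

/-- If `sortedVec a i > sortedVec b i`, then `(sort a)⁻¹ ∘ sort b` would map the `i + 1`
indices `≤ i` injectively into the `i` indices `< i`. -/
lemma sortedVec_le_sortedVec {a b : Fin n → ℝ} (h : a ≤ b) : sortedVec a ≤ sortedVec b := by
  intro i
  by_contra! hlt
  set σ := Tuple.sort a
  set τ := Tuple.sort b
  have hmaps : ∀ k ∈ Finset.Iic i, σ.symm (τ k) ∈ Finset.Iio i := by
    intro k hk
    rw [Finset.mem_Iio]
    by_contra! hik
    have h1 : sortedVec a i ≤ a (τ k) := by
      simpa [sortedVec, σ] using sortedVec_monotone a hik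
    have h2 : b (τ k) ≤ sortedVec b i := sortedVec_monotone b (Finset.mem_Iic.1 hk)
    linarith [h (τ k)]
  have := Finset.card_le_card_of_injOn _ hmaps (σ.symm.injective.comp τ.injective).injOn
  simp at this

lemma sortedVec_add_const (x : Fin n → ℝ) (c : ℝ) :
    sortedVec (fun j => x j + c) = fun i => sortedVec x i + c :=
  sortedVec_comp_of_monotone (f := (· + c)) x ((sortedVec_monotone x).add_const c)

lemma dist_sortedVec_le (a b : Fin n → ℝ) : dist (sortedVec a) (sortedVec b) ≤ dist a b := by
  have key : ∀ a b : Fin n → ℝ, ∀ i, sortedVec a i - sortedVec b i ≤ dist a b := by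
    intro a b i
    have hab : a ≤ fun j => b j + dist a b := fun j => by
      have := (le_abs_self (a j - b j)).trans
        ((Real.dist_eq _ _).symm.trans_le (dist_le_pi_dist a b j))
      linarith
    have := sortedVec_le_sortedVec hab i
    rw [sortedVec_add_const] at this
    linarith
  refine (dist_pi_le_iff dist_nonneg).2 fun i => ?_
  rw [Real.dist_eq, abs_sub_le_iff]
  exact ⟨key a b i, dist_comm a b ▸ key b a i⟩

@[fun_prop]
lemma continuous_sortedVec : Continuous (sortedVec : (Fin n → ℝ) → Fin n → ℝ) :=
  (LipschitzWith.of_dist_le_mul (K := 1) fun a b => by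
    simpa only [NNReal.coe_one, one_mul] using dist_sortedVec_le a b).continuous

end OrderStatistics

lemma monotone_finSnoc {n : ℕ} {α : Type*} [Preorder α] {f : Fin n → α} (hf : Monotone f)
    {x : α} (hx : ∀ i, f i ≤ x) : Monotone (Fin.snoc f x : Fin (n + 1) → α) := by
  intro i j hij
  induction j using Fin.lastCases with
  | last => induction i using Fin.lastCases with
    | last => exact le_rfl
    | cast i => simpa using hx i
  | cast j => induction i using Fin.lastCases with
    | last => exact absurd hij (not_le.2 (Fin.castSucc_lt_last j))
    | cast i => simpa using hf (Fin.castSucc_le_castSucc_iff.1 hij)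

lemma Fin.sum_succ_sub_castSucc {M : Type*} [AddCommGroup M] {n : ℕ} (q : Fin (n + 1) → M) :
    ∑ i : Fin n, (q i.succ - q i.castSucc) = q (Fin.last n) - q 0 := by
  induction n with
  | zero => simp
  | succ m ih =>
    have := ih fun j => q j.castSucc
    simp only [← Fin.succ_castSucc] at this
    rw [Fin.sum_univ_castSucc, this, Fin.succ_last, Fin.castSucc_zero]
    abel

section InducedMean

variable {n : ℕ}

lemma sortedVec_le_snoc_succ {z : Fin n → ℝ} {s : ℝ} (hz : ∀ i, z i ≤ s) (i : Fin n) :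
    sortedVec z i ≤ (Fin.snoc (sortedVec z) s : Fin (n + 1) → ℝ) i.succ := by
  simpa using monotone_finSnoc (sortedVec_monotone z) (sortedVec_apply_mem (A := Iic s) hz)
    (Fin.castSucc_le_succ i)

lemma inducedMean_le {s : ℝ} {z u : Fin n → ℝ} (hu : ∀ i, 0 ≤ u i) (hz : ∀ i, z i ≤ s) :
    inducedMean s z u ≤ s := by
  rw [inducedMean, sub_le_self_iff]
  exact Finset.sum_nonneg fun i _ =>
    mul_nonneg (sortedVec_apply_mem (A := Ici 0) hu i) (sub_nonneg.2 (sortedVec_le_snoc_succ hz i))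

lemma continuous_inducedMean (s : ℝ) (u : Fin n → ℝ) :
    Continuous fun z => inducedMean s z u := by
  have hsnoc : Continuous fun z : Fin n → ℝ => (Fin.snoc (sortedVec z) s : Fin (n + 1) → ℝ) :=
    continuous_sortedVec.finSnoc continuous_const
  unfold inducedMean
  fun_prop

/-- Each step is bounded by the corresponding step of `max (q ·) t`, which telescopes. -/
lemma sum_indicator_Iic_le_sub {q : Fin (n + 1) → ℝ} (hq : Monotone q) {s t : ℝ}
    (hqs : q (Fin.last n) ≤ s) (hts : t ≤ s) :
    ∑ i : Fin n, (Iic (q i.castSucc)).indicator (fun _ => q i.succ - q i.castSucc) t ≤ s - t := by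
  have hstep : ∀ i : Fin n, (Iic (q i.castSucc)).indicator (fun _ => q i.succ - q i.castSucc) t
      ≤ max (q i.succ) t - max (q i.castSucc) t := by
    intro i
    have hle := hq (Fin.castSucc_le_succ i)
    by_cases ht : t ∈ Iic (q i.castSucc)
    · rw [indicator_of_mem ht, max_eq_left (ht.trans hle), max_eq_left ht]
    · rw [indicator_of_notMem ht, max_eq_right (notMem_Iic.1 ht).le, sub_nonneg]
      exact le_max_right _ _
  calc _ ≤ ∑ i : Fin n, (max (q i.succ) t - max (q i.castSucc) t) :=
        Finset.sum_le_sum fun i _ => hstep i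
    _ = max (q (Fin.last n)) t - max (q 0) t := Fin.sum_succ_sub_castSucc fun j => max (q j) t
    _ ≤ s - t := by linarith [max_le hqs hts, le_max_right (q 0) t]

/-- `∑ u₍ᵢ₎ Δᵢ ≤ ∑ F(z₍ᵢ₎) Δᵢ = E[∑ 1{X ≤ z₍ᵢ₎} Δᵢ] ≤ E[s - X]`, with `Δᵢ = z₍ᵢ₊₁₎ - z₍ᵢ₎`. -/
lemma integral_le_inducedMean {ν : Measure ℝ} [IsProbabilityMeasure ν] (hint : Integrable id ν)
    {s : ℝ} (hs : ∀ᵐ t ∂ν, t ≤ s) {z u : Fin n → ℝ} (hz : ∀ i, z i ≤ s)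
    (hu : ∀ i, sortedVec u i ≤ cdf ν (sortedVec z i)) :
    ∫ t, t ∂ν ≤ inducedMean s z u := by
  set q : Fin (n + 1) → ℝ := Fin.snoc (sortedVec z) s
  have hq : Monotone q :=
    monotone_finSnoc (sortedVec_monotone z) (sortedVec_apply_mem (A := Iic s) hz)
  have hqz : ∀ i : Fin n, q i.castSucc = sortedVec z i := fun i => Fin.snoc_castSucc ..
  set step : Fin n → ℝ → ℝ := fun i =>
    (Iic (q i.castSucc)).indicator fun _ => q i.succ - q i.castSucc
  have hstep_int : ∀ i, Integrable (step i) ν :=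
    fun i => (integrable_const _).indicator measurableSet_Iic
  have hsum : ∑ i : Fin n, sortedVec u i * (q i.succ - sortedVec z i) ≤ s - ∫ t, t ∂ν :=
    calc ∑ i : Fin n, sortedVec u i * (q i.succ - sortedVec z i)
        ≤ ∑ i : Fin n, cdf ν (q i.castSucc) * (q i.succ - q i.castSucc) :=
          Finset.sum_le_sum fun i _ => by
            rw [hqz]
            exact mul_le_mul_of_nonneg_right (hu i) (sub_nonneg.2 (sortedVec_le_snoc_succ hz i))
      _ = ∫ t, ∑ i : Fin n, step i t ∂ν := by
          rw [integral_finsetSum _ fun i _ => hstep_int i]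
          refine Finset.sum_congr rfl fun i _ => ?_
          rw [integral_indicator_const _ measurableSet_Iic, cdf_eq_real, smul_eq_mul]
      _ ≤ ∫ t, (s - t) ∂ν := integral_mono_ae (integrable_finsetSum _ fun i _ => hstep_int i)
          ((integrable_const s).sub hint)
          (hs.mono fun t ht => sum_indicator_Iic_le_sub hq (by simp [q]) ht)
      _ = s - ∫ t, t ∂ν := by
          rw [integral_sub (integrable_const s) (g := fun t => t) hint, integral_const,
            probReal_univ, one_smul]
  rw [inducedMean]
  linarith

end InducedMean

section UpperBound

variable {n : ℕ} {D : Set ℝ} {T : (Fin n → ℝ) → ℝ} {x u : Fin n → ℝ}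

lemma inducedMean_le_sSup_of_mem_SsetD (hbdd : BddAbove D) (hu : ∀ i, 0 ≤ u i) {y : Fin n → ℝ}
    (hy : y ∈ SsetD D T x) : inducedMean (sSup D) y u ≤ sSup D :=
  inducedMean_le hu fun i => le_csSup hbdd (hy.1 i)

lemma bfun_le_sSup (hbdd : BddAbove D) (hx : ∀ i, x i ∈ D) (hu : ∀ i, 0 ≤ u i) :
    bfun D T x u ≤ sSup D :=
  csSup_le (Set.Nonempty.image _ ⟨x, hx, le_rfl⟩) <|
    forall_mem_image.2 fun _ hy => inducedMean_le_sSup_of_mem_SsetD hbdd hu hy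

lemma inducedMean_le_bfun_of_mem_closure (hbdd : BddAbove D) (hu : ∀ i, 0 ≤ u i)
    {z : Fin n → ℝ} (hz : z ∈ closure (SsetD D T x)) :
    inducedMean (sSup D) z u ≤ bfun D T x u := by
  set A := (fun y => inducedMean (sSup D) y u) '' SsetD D T x
  have hmem : inducedMean (sSup D) z u ∈ closure A :=
    mem_closure_image (continuous_inducedMean (sSup D) u).continuousAt hz
  have hbddA : sSup D ∈ upperBounds A :=
    forall_mem_image.2 fun _ hy => inducedMean_le_sSup_of_mem_SsetD hbdd hu hy
  have hlub : sSup A ∈ upperBounds (closure A) := upperBounds_closure A ▸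
    (isLUB_csSup (closure_nonempty_iff.1 ⟨_, hmem⟩) ⟨_, hbddA⟩).1
  exact hlub hmem

end UpperBound

section QuantileTransform

/-- The generalized inverse of the cdf of `ν` on `(0, 1)`, extended by `0` outside. -/
noncomputable def cdfInv (ν : Measure ℝ) (w : ℝ) : ℝ :=
  if w ∈ Ioo (0 : ℝ) 1 then sInf {t | w ≤ cdf ν t} else 0

variable {ν : Measure ℝ} {w : ℝ}

lemma bddBelow_setOf_le_cdf (hw : 0 < w) : BddBelow {t | w ≤ cdf ν t} := by
  obtain ⟨t₀, ht₀⟩ := eventually_atBot.1 ((tendsto_cdf_atBot ν).eventually (eventually_lt_nhds hw))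
  exact ⟨t₀, fun t ht => le_of_not_ge fun htt => (ht₀ t htt).not_ge ht⟩

lemma le_cdf_cdfInv (hw : w ∈ Ioo (0 : ℝ) 1) : w ≤ cdf ν (cdfInv ν w) := by
  have hne : {t | w ≤ cdf ν t}.Nonempty :=
    ((tendsto_cdf_atTop ν).eventually (eventually_gt_nhds hw.2)).exists.imp fun _ => le_of_lt
  rw [cdfInv, if_pos hw]
  have hright : ∀ t ∈ Ioi (sInf {t | w ≤ cdf ν t}), w ≤ cdf ν t := fun t ht => by
    obtain ⟨r, hr, hrt⟩ := exists_lt_of_csInf_lt hne ht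
    exact hr.trans (monotone_cdf ν hrt.le)
  exact ge_of_tendsto
    (((cdf ν).right_continuous _).mono_left (nhdsWithin_mono _ Ioi_subset_Ici_self))
    (eventually_nhdsWithin_of_forall hright)

lemma cdfInv_le_iff (hw : w ∈ Ioo (0 : ℝ) 1) {t : ℝ} : cdfInv ν w ≤ t ↔ w ≤ cdf ν t := by
  refine ⟨fun h => (le_cdf_cdfInv hw).trans (monotone_cdf ν h), fun h => ?_⟩
  rw [cdfInv, if_pos hw]
  exact csInf_le (bddBelow_setOf_le_cdf hw.1) h

lemma cdfInv_monotoneOn : MonotoneOn (cdfInv ν) (Ioo 0 1) := fun _ hw _ hw' h =>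
  (cdfInv_le_iff hw).2 (h.trans (le_cdf_cdfInv hw'))

lemma measurable_cdfInv : Measurable (cdfInv ν) := by
  refine measurable_of_restrict_of_restrict_compl measurableSet_Ioo
    (Monotone.measurable fun a b hab => cdfInv_monotoneOn a.2 b.2 hab) ?_
  have hzero : (Ioo (0 : ℝ) 1)ᶜ.domRestrict (cdfInv ν) = fun _ => 0 :=
    funext fun w => if_neg w.2
  rw [hzero]
  exact measurable_const

instance : IsProbabilityMeasure unif01 := ⟨by simp [unif01]⟩

instance (n : ℕ) : IsProbabilityMeasure (unifPi n) := by
  rw [unifPi]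
  infer_instance

lemma ae_mem_Ioo_unif01 : ∀ᵐ w ∂unif01, w ∈ Ioo (0 : ℝ) 1 := by
  rw [unif01, ← Measure.restrict_congr_set Ioo_ae_eq_Icc]
  exact ae_restrict_mem measurableSet_Ioo

lemma unif01_Iic {p : ℝ} (hp : p ≤ 1) : unif01 (Iic p) = ENNReal.ofReal p := by
  have : Iic p ∩ Icc 0 1 = Icc 0 p := by
    ext w
    simp only [mem_inter_iff, mem_Iic, mem_Icc]
    constructor <;> rintro ⟨h₁, h₂⟩ <;> [exact ⟨h₂.1, h₁⟩; exact ⟨h₂, h₁, h₂.trans hp⟩]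
  rw [unif01, Measure.restrict_apply measurableSet_Iic, this, Real.volume_Icc, sub_zero]

lemma map_cdfInv_unif01 [IsProbabilityMeasure ν] : unif01.map (cdfInv ν) = ν := by
  refine Measure.ext_of_Iic _ _ fun c => ?_
  have hae : cdfInv ν ⁻¹' Iic c =ᵐ[unif01] Iic (cdf ν c) :=
    ae_mem_Ioo_unif01.mono fun w hw => propext (cdfInv_le_iff hw)
  rw [Measure.map_apply measurable_cdfInv measurableSet_Iic, measure_congr hae,
    unif01_Iic (cdf_le_one ν c), ofReal_cdf]

lemma measurePreserving_cdfInv_pi [IsProbabilityMeasure ν] (n : ℕ) :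
    MeasurePreserving (fun (u : Fin n → ℝ) i => cdfInv ν (u i)) (unifPi n)
      (Measure.pi fun _ => ν) :=
  measurePreserving_pi _ _ fun _ => ⟨measurable_cdfInv, map_cdfInv_unif01⟩

end QuantileTransform

lemma le_rquantile {Ω : Type*} [MeasurableSpace Ω] {P : Measure Ω} [IsProbabilityMeasure P]
    {Y : Ω → ℝ} {A : Set Ω} (hA : MeasurableSet A) {a p : ℝ}
    (hAp : 1 - ENNReal.ofReal p < P A) (hY : ∀ᵐ ω ∂P, ω ∈ A → a ≤ Y ω)
    (hne : ∃ y, ENNReal.ofReal p ≤ P {ω | Y ω ≤ y}) : a ≤ rquantile P Y p := by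
  refine le_csInf hne fun y hy => le_of_not_gt fun hya => hAp.not_ge ?_
  have hsub : {ω | Y ω ≤ y} ≤ᵐ[P] Aᶜ :=
    hY.mono fun ω hω hYω hωA => (hω hωA).not_gt (lt_of_le_of_lt hYω hya)
  have h := hy.trans ((measure_mono_ae hsub).trans_eq (prob_compl_eq_one_sub hA))
  exact ENNReal.le_sub_of_add_le_left ENNReal.ofReal_ne_top
    ((ENNReal.le_sub_iff_add_le_right (measure_ne_top P A) prob_le_one).1 h)

lemma ae_pi_forall_mem {ι α : Type*} [Fintype ι] [MeasurableSpace α] {μ : Measure α}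
    [SigmaFinite μ] {A : Set α} (h : ∀ᵐ t ∂μ, t ∈ A) :
    ∀ᵐ x ∂Measure.pi (fun _ : ι => μ), ∀ i, x i ∈ A :=
  ae_all_iff.2 fun _ => Measure.tendsto_eval_ae_ae.eventually h

lemma Set.Nonempty.exists_seq_cofinal {s : Set ℝ} (hs : s.Nonempty) :
    ∃ v : ℕ → ℝ, (∀ k, v k ∈ s) ∧ ∀ a ∈ s, ∃ k, a ≤ v k := by
  by_cases hb : BddAbove s
  · by_cases hmem : sSup s ∈ s
    · exact ⟨fun _ => sSup s, fun _ => hmem, fun a ha => ⟨0, le_csSup hb ha⟩⟩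
    obtain ⟨v, -, hlim, hvs⟩ := exists_seq_tendsto_sSup hs hb
    refine ⟨v, hvs, fun a ha => ?_⟩
    have hlt : a < sSup s := (le_csSup hb ha).lt_of_ne fun h => hmem (h ▸ ha)
    exact ((hlim.eventually (lt_mem_nhds hlt)).exists).imp fun _ => le_of_lt
  · choose v hvs hv using fun k : ℕ => not_bddAbove_iff.1 hb k
    exact ⟨v, hvs, fun a _ => (exists_nat_ge a).imp fun k hk => hk.trans (hv k).le⟩

lemma measure_biUnion_le_of_monotone {α : Type*} [MeasurableSpace α] {μ : Measure α}
    {f : ℝ → Set α} (hf : Monotone f) {s : Set ℝ} {c : ℝ≥0∞} (h : ∀ t ∈ s, μ (f t) ≤ c) :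
    μ (⋃ t ∈ s, f t) ≤ c := by
  rcases s.eq_empty_or_nonempty with rfl | hs
  · simp
  obtain ⟨v, hvs, hv⟩ := hs.exists_seq_cofinal
  have hdir : Directed (· ⊆ ·) (f ∘ v) := fun k l =>
    (le_total (v k) (v l)).elim (fun h => ⟨l, hf h, le_rfl⟩) fun h => ⟨k, le_rfl, hf h⟩
  calc μ (⋃ t ∈ s, f t) ≤ μ (⋃ k, f (v k)) := measure_mono <| iUnion₂_subset fun t ht =>
        let ⟨k, hk⟩ := hv t ht; (hf hk).trans (subset_iUnion (f ∘ v) k)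
    _ = ⨆ k, μ (f (v k)) := hdir.measure_iUnion
    _ ≤ c := iSup_le fun k => h _ (hvs k)

section Coverage

variable {n : ℕ} {ν : Measure ℝ} [IsProbabilityMeasure ν] {D : Set ℝ} {T : (Fin n → ℝ) → ℝ}
  {x : Fin n → ℝ}

lemma integral_le_bfun_of_cdfInv_mem_closure (hint : Integrable id ν) (hbdd : BddAbove D)
    (hsupp : ∀ᵐ t ∂ν, t ∈ D) {u : Fin n → ℝ} (hu : ∀ i, u i ∈ Ioo (0 : ℝ) 1)
    (hz : cdfInv ν ∘ u ∈ closure (SsetD D T x)) : ∫ t, t ∂ν ≤ bfun D T x u := by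
  have hbox : closure (SsetD D T x) ⊆ univ.pi fun _ => Iic (sSup D) :=
    closure_minimal (fun y hy i _ => le_csSup hbdd (hy.1 i))
      (isClosed_set_pi fun _ _ => isClosed_Iic)
  have hsort : sortedVec (cdfInv ν ∘ u) = cdfInv ν ∘ sortedVec u :=
    sortedVec_comp_of_monotone u fun i j hij => cdfInv_monotoneOn (sortedVec_apply_mem hu i)
      (sortedVec_apply_mem hu j) (sortedVec_monotone u hij)
  calc ∫ t, t ∂ν ≤ inducedMean (sSup D) (cdfInv ν ∘ u) u :=
        integral_le_inducedMean hint (hsupp.mono fun t ht => le_csSup hbdd ht)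
          (fun i => hbox hz i (mem_univ i))
          fun i => by rw [hsort]; exact le_cdf_cdfInv (sortedVec_apply_mem hu i)
    _ ≤ bfun D T x u := inducedMean_le_bfun_of_mem_closure hbdd (fun i => (hu i).1.le) hz

/-- The closure is taken so that the event `F⁻¹(U) ∈ closure S(x)` is measurable. -/
lemma measure_closure_SsetD_le (hint : Integrable id ν) (hbdd : BddAbove D)
    (hsupp : ∀ᵐ t ∂ν, t ∈ D) {α : ℝ} (hα : 0 ≤ α) (hx : ∀ i, x i ∈ D)
    (hucb : ucb D T α x < ∫ t, t ∂ν) :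
    Measure.pi (fun _ : Fin n => ν) (closure (SsetD D T x)) ≤ ENNReal.ofReal α := by
  by_contra! hlt
  have hQ := measurePreserving_cdfInv_pi (ν := ν) n
  have hC : MeasurableSet (closure (SsetD D T x)) := isClosed_closure.measurableSet
  have hu : ∀ᵐ u ∂unifPi n, ∀ i, u i ∈ Ioo (0 : ℝ) 1 := ae_pi_forall_mem ae_mem_Ioo_unif01
  refine hucb.not_ge (le_rquantile (hQ.measurable hC) ?_ ?_ ⟨sSup D, ?_⟩)
  · rw [hQ.measure_preimage hC.nullMeasurableSet]
    refine lt_of_le_of_lt ?_ hlt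
    rw [tsub_le_iff_right, ← ENNReal.ofReal_one]
    exact (ENNReal.ofReal_le_ofReal (by linarith)).trans ENNReal.ofReal_add_le
  · filter_upwards [hu] with u hu hz
    exact integral_le_bfun_of_cdfInv_mem_closure hint hbdd hsupp hu hz
  · calc ENNReal.ofReal (1 - α) ≤ unifPi n univ := by
          rw [measure_univ]
          exact ENNReal.ofReal_le_one.2 (by linarith)
      _ ≤ _ := measure_mono_ae <| hu.mono fun u hu _ =>
          bfun_le_sSup hbdd hx fun i => (hu i).1.le

end Coverage

theorem stmt7_general {n : ℕ} (D : Set ℝ) (hbdd : BddAbove D)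
    (ν : Measure ℝ) [IsProbabilityMeasure ν] (hsupp : ∀ᵐ t ∂ν, t ∈ D)
    (hint : Integrable id ν) (μmean : ℝ) (hmean : μmean = ∫ t, t ∂ν)
    (T : (Fin n → ℝ) → ℝ) (α : ℝ) (hα : α ∈ Set.Ioo (0:ℝ) 1) :
    (Measure.pi fun _ : Fin n => ν) {x | ucb D T α x < μmean}
      ≤ ENNReal.ofReal α := by
  subst hmean
  set A := {x : Fin n → ℝ | ucb D T α x < ∫ t, t ∂ν ∧ ∀ i, x i ∈ D}
  have hcover : {x | ucb D T α x < ∫ t, t ∂ν} ≤ᵐ[Measure.pi fun _ => ν]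
      ⋃ t ∈ T '' A, closure {y | (∀ i, y i ∈ D) ∧ T y ≤ t} :=
    (ae_pi_forall_mem hsupp).mono fun x hxD hx =>
      mem_biUnion (mem_image_of_mem T (show x ∈ A from ⟨hx, hxD⟩)) (subset_closure ⟨hxD, le_rfl⟩)
  have hmono : Monotone fun t => closure {y : Fin n → ℝ | (∀ i, y i ∈ D) ∧ T y ≤ t} :=
    fun t t' h => closure_mono fun y hy => ⟨hy.1, hy.2.trans h⟩
  refine (measure_mono_ae hcover).trans (measure_biUnion_le_of_monotone hmono ?_)
  rintro _ ⟨x, ⟨hx, hxD⟩, rfl⟩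
  exact measure_closure_SsetD_le hint hbdd hsupp hα.1.le hxD hx

/-- Guaranteed coverage: for `X` an i.i.d. sample of size `n` from a
distribution `ν` supported on `D` (with `sup D` finite) with mean `μ`,
`P(b^α_{D,T}(X) < μ) ≤ α`. -/
theorem stmt7 {n : ℕ} (D : Set ℝ) (hD : D.Nonempty) (hbdd : BddAbove D)
    (ν : Measure ℝ) [IsProbabilityMeasure ν] (hsupp : ∀ᵐ t ∂ν, t ∈ D)
    (hint : Integrable id ν) (μmean : ℝ) (hmean : μmean = ∫ t, t ∂ν)
    (T : (Fin n → ℝ) → ℝ) (α : ℝ) (hα : α ∈ Set.Ioo (0:ℝ) 1) :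
    (Measure.pi fun _ : Fin n => ν) {x | ucb D T α x < μmean}
      ≤ ENNReal.ofReal α :=
  stmt7_general D hbdd ν hsupp hint μmean hmean T α hα
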